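/- Let S be a finite set, μ a capacity on 2^S with Möbius inverse m such that m ≥ 0. Then μ is supermodular: for all E, F ⊆ S, μ(E ∪ F) + μ(E ∩ F) ≥ μ(E) + μ(F). -/

import Mathlib

/-!
Möbius inversion on the Boolean lattice recovers `μ E = ∑_{A ⊆ E} m A`. Since the subsets of
`E ∩ F` are exactly the common subsets of `E` and `F`, inclusion–exclusion for the index sets gives
`μ E + μ F = ∑_{𝒫 E ∪ 𝒫 F} m + μ (E ∩ F)`, and `𝒫 E ∪ 𝒫 F ⊆ 𝒫 (E ∪ F)` together with `m ≥ 0`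
bounds the first sum by `μ (E ∪ F)`.
-/

open Finset

namespace Finset

variable {α R : Type*} [DecidableEq α]

theorem sum_powerset_neg_one_pow_card_eq_ite [Ring R] (s : Finset α) :
    ∑ t ∈ s.powerset, (-1 : R) ^ #t = if s = ∅ then 1 else 0 := by
  have h := congrArg (Int.cast : ℤ → R) (sum_powerset_neg_one_pow_card (x := s))
  push_cast at h
  exact h

theorem sum_Icc_neg_one_pow_card_sdiff [Ring R] {s t : Finset α} (hst : s ⊆ t) :
    ∑ u ∈ Icc s t, (-1 : R) ^ #(u \ s) = if s = t then 1 else 0 := by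
  have hinj : Set.InjOn (s ∪ ·) (t \ s).powerset := fun v hv w hw hvw => by
    have hv : Disjoint s v := disjoint_sdiff.mono_right (mem_powerset.mp hv)
    have hw : Disjoint s w := disjoint_sdiff.mono_right (mem_powerset.mp hw)
    simpa [union_sdiff_cancel_left hv, union_sdiff_cancel_left hw] using
      congrArg (· \ s) hvw
  rw [Icc_eq_image_powerset hst, sum_image hinj, sum_congr rfl fun v hv => by
    rw [union_sdiff_cancel_left (disjoint_sdiff.mono_right (mem_powerset.mp hv))]]
  have hempty : t \ s = ∅ ↔ s = t :=
    sdiff_eq_empty_iff_subset.trans ⟨hst.antisymm, fun h => h ▸ subset_rfl⟩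
  simp only [sum_powerset_neg_one_pow_card_eq_ite, hempty]

theorem sum_powerset_sum_powerset_neg_one_pow_mul [Ring R] (f : Finset α → R) (s : Finset α) :
    ∑ t ∈ s.powerset, ∑ u ∈ t.powerset, (-1 : R) ^ #(t \ u) * f u = f s := by
  simp only [← Iic_eq_powerset]
  rw [sum_comm' (t' := Iic s) (s' := fun u => Icc u s) fun t u => by
    simp only [mem_Iic, mem_Icc]
    exact ⟨fun ⟨hts, hut⟩ => ⟨⟨hut, hts⟩, hut.trans hts⟩, fun ⟨⟨hut, hts⟩, _⟩ => ⟨hts, hut⟩⟩]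
  rw [sum_congr rfl fun u hu => by
    rw [← sum_mul, sum_Icc_neg_one_pow_card_sdiff (mem_Iic.mp hu), ite_mul, one_mul, zero_mul]]
  simp

theorem sum_powerset_add_sum_powerset_le {M : Type*} [AddCommMonoid M] [PartialOrder M]
    [IsOrderedAddMonoid M] {g : Finset α → M} (hg : ∀ s, 0 ≤ g s) (s t : Finset α) :
    ∑ u ∈ s.powerset, g u + ∑ u ∈ t.powerset, g u
      ≤ ∑ u ∈ (s ∪ t).powerset, g u + ∑ u ∈ (s ∩ t).powerset, g u := by
  have hinter : (s ∩ t).powerset = s.powerset ∩ t.powerset := by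
    ext; simp only [mem_powerset, mem_inter, subset_inter_iff]
  rw [hinter, ← sum_union_inter]
  gcongr ?_ + _
  exact sum_le_sum_of_subset_of_nonneg (union_subset (powerset_mono.mpr subset_union_left)
    (powerset_mono.mpr subset_union_right)) fun u _ _ => hg u

end Finset

theorem stmt_16_general {S : Type*} [DecidableEq S] (μ : Finset S → ℝ)
    (m : Finset S → ℝ)
    (hm : ∀ E : Finset S, m E = ∑ A ∈ E.powerset, (-1 : ℝ) ^ (E \ A).card * μ A)
    (hm0 : ∀ E : Finset S, 0 ≤ m E) :
    ∀ E F : Finset S, μ E + μ F ≤ μ (E ∪ F) + μ (E ∩ F) := by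
  have hμ : ∀ E, μ E = ∑ A ∈ E.powerset, m A := fun E => by
    simp only [hm]
    exact (sum_powerset_sum_powerset_neg_one_pow_mul μ E).symm
  intro E F
  simp only [hμ]
  exact sum_powerset_add_sum_powerset_le hm0 E F

/-- A grounded set function with nonnegative Möbius inverse is supermodular. -/
theorem stmt_16 {S : Type*} [DecidableEq S] (μ : Finset S → ℝ) (hground : μ ∅ = 0)
    (m : Finset S → ℝ)
    (hm : ∀ E : Finset S, m E = ∑ A ∈ E.powerset, (-1 : ℝ) ^ (E \ A).card * μ A)
    (hm0 : ∀ E : Finset S, 0 ≤ m E) :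
    ∀ E F : Finset S, μ E + μ F ≤ μ (E ∪ F) + μ (E ∩ F) :=
  stmt_16_general μ m hm hm0
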